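/- For n a power of two with n ≥ 4, let φ be the permutation of [n] with φ(i) = (i+1)/2 for odd i and φ(i) = n/2 + i/2 for even i, and let Φ be the complete binary voting tree with 2n leaves labeled left-to-right by (1, ..., n, φ(1), ..., φ(n)). Then for every perfect manipulator tournament T on [n] with parts {α}, B, C, the winner of Φ on T is not an element of C. -/
import Mathlib


/-- A voting tree: a binary tree whose leaves are labeled by candidates. -/
inductive VTree (α : Type) : Type
  | leaf : α → VTree α
  | node : VTree α → VTree α → VTree α

namespace VTree

variable {α β : Type}

/-- Evaluate a voting tree on the `beats` relation `T`: at each internal node the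
child's label that beats the other propagates (a label beats itself since `T` is
irreflexive for tournaments). -/
def eval (T : α → α → Bool) : VTree α → α
  | leaf a => a
  | node l r => if T (eval T l) (eval T r) then eval T l else eval T r

/-- The list of leaf labels, left to right. -/
def leaves : VTree α → List α
  | leaf a => [a]
  | node l r => leaves l ++ leaves r

/-- Relabel the leaves of a voting tree. -/
def map (f : α → β) : VTree α → VTree β
  | leaf a => leaf (f a)
  | node l r => node (map f l) (map f r)

/-- Substitute a voting tree for each leaf. -/
def bind : VTree α → (α → VTree β) → VTree β
  | leaf a, f => f a
  | node l r, f => node (bind l f) (bind r f)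

/-- The complete binary tree of depth `d` whose leaves, left to right, are
`f 0, f 1, …, f (2^d - 1)`. -/
def completeTree (f : ℕ → α) : ℕ → VTree α
  | 0 => leaf (f 0)
  | d + 1 => node (completeTree f d) (completeTree (fun i => f (i + 2 ^ d)) d)

/-- Pair up adjacent trees in a list by a match. -/
def pairUp : List (VTree α) → List (VTree α)
  | a :: b :: rest => node a b :: pairUp rest
  | l => l

theorem pairUp_length : ∀ l : List (VTree α), (pairUp l).length = (l.length + 1) / 2
  | [] => by simp [pairUp]
  | [_] => by simp [pairUp]
  | a :: b :: rest => by
      simp only [pairUp, List.length_cons, pairUp_length rest]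
      omega

/-- Play off a list of trees in a balanced binary fashion (round-robin of rounds). -/
def roundRobin (d : VTree α) : List (VTree α) → VTree α
  | [] => d
  | [t] => t
  | t₁ :: t₂ :: rest => roundRobin d (pairUp (t₁ :: t₂ :: rest))
  termination_by l => l.length
  decreasing_by simp only [pairUp_length, List.length_cons]; omega

/-- The voting tree `Λ_{i:S}`: one leaf-pair `(i, s)` for each `s` in the list `S`,
with the match winners played off in a balanced binary tree. -/
def lambdaTree (i : α) (S : List α) : VTree α :=
  roundRobin (leaf i) (S.map fun s => node (leaf i) (leaf s))

end VTree

/-- A tournament: an irreflexive relation such that for distinct `a`, `b`,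
exactly one of `a` beats `b` or `b` beats `a` holds. -/
def IsTournament {α : Type} (T : α → α → Bool) : Prop :=
  (∀ a, T a a = false) ∧ ∀ a b : α, a ≠ b → T a b = !T b a

/-- The out-degree of a vertex in a tournament on `Fin n`. -/
def outDeg {n : ℕ} (T : Fin n → Fin n → Bool) (v : Fin n) : ℕ :=
  (Finset.univ.filter fun w => T v w).card

/-- A perfect manipulator tournament on `Fin n` with manipulator `a` and parts
`{a}`, `B`, `C`: `B`, `C` are nonempty, the three parts partition the vertices,
`a` beats all of `B`, every member of `B` beats every member of `C`, and every
member of `C` beats `a`. -/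
def IsPerfectManipulator {n : ℕ} (T : Fin n → Fin n → Bool) (a : Fin n)
    (B C : Finset (Fin n)) : Prop :=
  IsTournament T ∧ B.Nonempty ∧ C.Nonempty ∧ a ∉ B ∧ a ∉ C ∧ Disjoint B C ∧
    insert a (B ∪ C) = Finset.univ ∧
    (∀ b ∈ B, T a b) ∧ (∀ b ∈ B, ∀ c ∈ C, T b c) ∧ (∀ c ∈ C, T c a)

/-- The shuffle permutation `φ` of the paper, written 0-based: the leaf in
position `j` of the right half of `Φ` receives label `j/2` if `j` is even and
`n/2 + j/2` if `j` is odd (this is the 0-based form of `φ(i) = (i+1)/2` for odd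
`i` and `φ(i) = n/2 + i/2` for even `i`). -/
def shufflePerm (n : ℕ) (j : ℕ) : ℕ :=
  if j % 2 = 0 then j / 2 else n / 2 + j / 2

namespace PMaux

inductive Cl : Type | A | B | C
deriving DecidableEq

def R3 : Cl → Cl → Bool
  | .A, .B => true
  | .B, .C => true
  | .C, .A => true
  | _, _ => false

/-- Winner class of the complete tree of depth `d` on class labels `f`. -/
def Wc (f : ℕ → Cl) (d : ℕ) : Cl := (VTree.completeTree f d).eval R3

lemma Wc_zero (f : ℕ → Cl) : Wc f 0 = f 0 := rfl

lemma Wc_succ (f : ℕ → Cl) (d : ℕ) :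
    Wc f (d+1) = if R3 (Wc f d) (Wc (fun i => f (i + 2^d)) d) then Wc f d
      else Wc (fun i => f (i + 2^d)) d := rfl

lemma R3_self (x : Cl) : R3 x x = false := by cases x <;> rfl

lemma map_completeTree {α β : Type} (g : α → β) (f : ℕ → α) (d : ℕ) :
    (VTree.completeTree f d).map g = VTree.completeTree (fun i => g (f i)) d := by
  induction d generalizing f with
  | zero => rfl
  | succ d ih => simp only [VTree.completeTree, VTree.map, ih]

lemma clOf_eval {α : Type} (T : α → α → Bool) (π : α → Cl)
    (hT : ∀ u v, π u ≠ π v → T u v = R3 (π u) (π v)) :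
    ∀ t : VTree α, π (t.eval T) = (t.map π).eval R3
  | .leaf a => rfl
  | .node l r => by
      have hl := clOf_eval T π hT l
      have hr := clOf_eval T π hT r
      simp only [VTree.eval, VTree.map, ← hl, ← hr]
      by_cases h : π (l.eval T) = π (r.eval T)
      · rw [← h, R3_self]
        split <;> simp [h]
      · rw [hT _ _ h]
        split <;> rfl

lemma exists_split (f : ℕ → Cl) (d : ℕ) (v : Cl) :
    (∃ i < 2^(d+1), f i = v) ↔
      (∃ i < 2^d, f i = v) ∨ (∃ i < 2^d, f (i + 2^d) = v) := by
  have h2 : 2^(d+1) = 2^d + 2^d := by rw [pow_succ]; omega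
  constructor
  · rintro ⟨i, hi, hv⟩
    by_cases hlt : i < 2^d
    · exact Or.inl ⟨i, hlt, hv⟩
    · refine Or.inr ⟨i - 2^d, by omega, ?_⟩
      rwa [show i - 2^d + 2^d = i by omega]
  · rintro (⟨i, hi, hv⟩ | ⟨i, hi, hv⟩)
    · exact ⟨i, by omega, hv⟩
    · exact ⟨i + 2^d, by omega, hv⟩

/-- In an `A`-free block, the winner is not `A`, and it is `B` iff some `B` occurs. -/
lemma wc_noA : ∀ (d : ℕ) (f : ℕ → Cl), (∀ i < 2^d, f i ≠ .A) →
    Wc f d ≠ .A ∧ (Wc f d = .B ↔ ∃ i < 2^d, f i = .B) := by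
  intro d
  induction d with
  | zero =>
      intro f h
      have h0 := h 0 (by norm_num)
      rw [Wc_zero]
      refine ⟨h0, ?_, ?_⟩
      · intro hb; exact ⟨0, by norm_num, hb⟩
      · rintro ⟨i, hi, hb⟩
        have : i = 0 := by omega
        rwa [← this]
  | succ d ih =>
      intro f h
      have h2 : 2^(d+1) = 2^d + 2^d := by rw [pow_succ]; omega
      have hL : ∀ i < 2^d, f i ≠ .A := fun i hi => h i (by omega)
      have hR : ∀ i < 2^d, f (i + 2^d) ≠ .A := fun i hi => h _ (by omega)
      obtain ⟨hLA, hLB⟩ := ih f hL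
      obtain ⟨hRA, hRB⟩ := ih _ hR
      rw [Wc_succ, exists_split]
      rcases hwl : Wc f d with _ | _ | _ <;>
        rcases hwr : Wc (fun i => f (i + 2^d)) d with _ | _ | _ <;>
        simp_all [R3]

/-- The winner of a complete tree is one of the leaves. -/
lemma wc_is_leaf : ∀ (d : ℕ) (f : ℕ → Cl), ∃ i < 2^d, Wc f d = f i := by
  intro d
  induction d with
  | zero => intro f; exact ⟨0, by norm_num, rfl⟩
  | succ d ih =>
      intro f
      have h2 : 2^(d+1) = 2^d + 2^d := by rw [pow_succ]; omega
      obtain ⟨i, hi, hL⟩ := ih f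
      obtain ⟨j, hj, hR⟩ := ih (fun i => f (i + 2^d))
      rw [Wc_succ]
      split
      · exact ⟨i, by omega, hL⟩
      · exact ⟨j + 2^d, by omega, hR⟩

/-- If `A` occurs only (possibly) at position `p` and the winner is `C`, then
every leaf in the half not containing `p` is `C`. -/
lemma wc_C_opp (d : ℕ) (f : ℕ → Cl) (p : ℕ) (hp : p < 2^(d+1))
    (huniq : ∀ i < 2^(d+1), f i = .A → i = p)
    (hw : Wc f (d+1) = .C) :
    ∀ i < 2^(d+1), i / 2^d ≠ p / 2^d → f i = .C := by
  have h2 : 2^(d+1) = 2^d + 2^d := by rw [pow_succ]; omega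
  intro i hi hdiff
  -- i and p are in different halves
  have hip : (i < 2^d ∧ 2^d ≤ p) ∨ (2^d ≤ i ∧ p < 2^d) := by
    rcases lt_or_ge i (2^d) with h | h
    · left; refine ⟨h, ?_⟩
      by_contra hc
      exact hdiff (by rw [Nat.div_eq_of_lt h, Nat.div_eq_of_lt (by omega)])
    · right; refine ⟨h, ?_⟩
      by_contra hc
      have e1 : i / 2^d = 1 := Nat.div_eq_of_lt_le (by omega) (by omega)
      have e2 : p / 2^d = 1 := Nat.div_eq_of_lt_le (by omega) (by omega)
      exact hdiff (by rw [e1, e2])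
  rcases hf : f i with _ | _ | _
  · exact absurd (huniq i hi hf) (by rcases hip with ⟨h1,h2'⟩|⟨h1,h2'⟩ <;> omega)
  · -- a B in the A-free half forces the overall winner to be A or B
    exfalso
    rcases hip with ⟨hi1, hp1⟩ | ⟨hi1, hp1⟩
    · -- i in left half, p in right half: left half is A-free
      have hnoA : ∀ j < 2^d, f j ≠ .A := by
        intro j hj hA
        have := huniq j (by omega) hA; omega
      obtain ⟨hLA, hLB⟩ := wc_noA d f hnoA
      have hwl : Wc f d = .B := hLB.2 ⟨i, hi1, hf⟩
      rw [Wc_succ, hwl] at hw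
      rcases hwr : Wc (fun j => f (j + 2^d)) d with _ | _ | _ <;>
        rw [hwr] at hw <;> simp [R3] at hw
    · -- i in right half, p in left half: right half is A-free
      have hnoA : ∀ j < 2^d, f (j + 2^d) ≠ .A := by
        intro j hj hA
        have := huniq (j + 2^d) (by omega) hA; omega
      obtain ⟨hRA, hRB⟩ := wc_noA d (fun j => f (j + 2^d)) hnoA
      have hwr : Wc (fun j => f (j + 2^d)) d = .B := by
        refine hRB.2 ⟨i - 2^d, by omega, ?_⟩
        rwa [show i - 2^d + 2^d = i by omega]
      rw [Wc_succ, hwr] at hw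
      rcases hwl : Wc f d with _ | _ | _ <;>
        rw [hwl] at hw <;> simp [R3] at hw
  · rfl

/-- The partner of a position in the first round. -/
def ptn (p : ℕ) : ℕ := if p % 2 = 0 then p + 1 else p - 1

lemma ptn_lt {p e : ℕ} (h : p < 2 * e) : ptn p < 2 * e := by
  unfold ptn; split <;> omega

lemma ptn_shift {p m : ℕ} (hm : 2 ∣ m) (hp : m ≤ p) : ptn p = ptn (p - m) + m := by
  obtain ⟨e, rfl⟩ := hm
  unfold ptn
  split <;> split <;> omega

/-- If the unique `A` is at `p` and its first-round partner is a `C`, the winner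
is not `A`. -/
lemma wc_ptnC_ne_A : ∀ (d : ℕ) (f : ℕ → Cl) (p : ℕ), p < 2^(d+1) →
    (∀ i < 2^(d+1), f i = .A → i = p) → f (ptn p) = .C → Wc f (d+1) ≠ .A := by
  intro d
  induction d with
  | zero =>
      intro f p hp huniq hptn hA
      rw [show Wc f 1 = if R3 (f 0) (f 1) then f 0 else f 1 from rfl] at hA
      have hp2 : p = 0 ∨ p = 1 := by omega
      rcases hp2 with rfl | rfl
      · rw [show ptn 0 = 1 from rfl] at hptn
        rcases h0 : f 0 with _ | _ | _ <;> rw [h0, hptn] at hA <;> revert hA <;> decide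
      · rw [show ptn 1 = 0 from rfl] at hptn
        rcases h1 : f 1 with _ | _ | _ <;> rw [h1, hptn] at hA <;> revert hA <;> decide
  | succ d ih =>
      intro f p hp huniq hptn hA
      have h2 : 2^(d+1+1) = 2^(d+1) + 2^(d+1) := by rw [pow_succ]; omega
      rw [Wc_succ] at hA
      by_cases hside : p < 2^(d+1)
      · have hnoA : ∀ j < 2^(d+1), (fun i => f (i + 2^(d+1))) j ≠ .A := by
          intro j hj hA'; have := huniq _ (by omega) hA'; omega
        have hwr := (wc_noA (d+1) _ hnoA).1
        have hwl := ih f p hside (fun i hi => huniq i (by omega)) hptn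
        split at hA
        · exact hwl hA
        · exact hwr hA
      · have hdvd : (2:ℕ) ∣ 2^(d+1) := dvd_pow_self 2 (Nat.succ_ne_zero d)
        have hptn' : ptn p = ptn (p - 2^(d+1)) + 2^(d+1) := ptn_shift hdvd (by omega)
        have huniq' : ∀ i < 2^(d+1), (fun i => f (i + 2^(d+1))) i = .A → i = p - 2^(d+1) := by
          intro i hi hA'; have := huniq _ (by omega) hA'; omega
        have hwr := ih (fun i => f (i + 2^(d+1))) (p - 2^(d+1)) (by omega) huniq'
          (by show f (ptn (p - 2^(d+1)) + 2^(d+1)) = .C; rw [← hptn']; exact hptn)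
        have hnoA : ∀ j < 2^(d+1), f j ≠ .A := by
          intro j hj hA'; have := huniq j (by omega) hA'; omega
        have hwl := (wc_noA (d+1) f hnoA).1
        split at hA
        · exact hwl hA
        · exact hwr hA

/-- If the unique `A` is at `p`, its first-round partner is a `C`, and some `B`
occurs, then the winner is `B`. -/
lemma wc_ptnC_B : ∀ (d : ℕ) (f : ℕ → Cl) (p : ℕ), p < 2^(d+1) →
    (∀ i < 2^(d+1), f i = .A → i = p) → f p = .A → f (ptn p) = .C →
    (∃ i < 2^(d+1), f i = .B) → Wc f (d+1) = .B := by
  intro d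
  induction d with
  | zero =>
      rintro f p hp huniq hpA hptn ⟨i, hi, hB⟩
      exfalso
      have hp2 : p = 0 ∨ p = 1 := by omega
      have hi2 : i = 0 ∨ i = 1 := by omega
      rcases hp2 with rfl | rfl <;> rcases hi2 with rfl | rfl <;> simp_all [ptn]
  | succ d ih =>
      rintro f p hp huniq hpA hptn ⟨i, hi, hB⟩
      have h2 : 2^(d+1+1) = 2^(d+1) + 2^(d+1) := by rw [pow_succ]; omega
      rw [Wc_succ]
      by_cases hside : p < 2^(d+1)
      · -- A in left half; right half is A-free
        have hnoA : ∀ j < 2^(d+1), (fun i => f (i + 2^(d+1))) j ≠ .A := by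
          intro j hj hA'; have := huniq _ (by omega) hA'; omega
        obtain ⟨hRA, hRB⟩ := wc_noA (d+1) _ hnoA
        have huniqL : ∀ i < 2^(d+1), f i = .A → i = p := fun i hi => huniq i (by omega)
        have hwlA : Wc f (d+1) ≠ .A := wc_ptnC_ne_A d f p hside huniqL hptn
        by_cases hBL : ∃ j < 2^(d+1), f j = .B
        · have hwl : Wc f (d+1) = .B := ih f p hside huniqL hpA hptn hBL
          rw [hwl]
          rcases hwr : Wc (fun i => f (i + 2^(d+1))) (d+1) with _ | _ | _
          · exact absurd hwr hRA
          · decide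
          · decide
        · -- the B is in the right half
          have hiR : 2^(d+1) ≤ i := by
            by_contra hc; exact hBL ⟨i, by omega, hB⟩
          have hwr : Wc (fun i => f (i + 2^(d+1))) (d+1) = .B := by
            refine hRB.2 ⟨i - 2^(d+1), by omega, ?_⟩
            show f (i - 2^(d+1) + 2^(d+1)) = .B
            rwa [show i - 2^(d+1) + 2^(d+1) = i by omega]
          have hwlC : Wc f (d+1) = .C := by
            obtain ⟨j, hj, hleaf⟩ := wc_is_leaf (d+1) f
            rcases hw : Wc f (d+1) with _ | _ | _
            · exact absurd hw hwlA
            · exact (hBL ⟨j, hj, by rw [← hleaf]; exact hw⟩).elim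
            · rfl
          rw [hwlC, hwr]; decide
      · -- A in right half; left half is A-free
        have hnoA : ∀ j < 2^(d+1), f j ≠ .A := by
          intro j hj hA'; have := huniq j (by omega) hA'; omega
        obtain ⟨hLA, hLB⟩ := wc_noA (d+1) f hnoA
        have hdvd : (2:ℕ) ∣ 2^(d+1) := dvd_pow_self 2 (Nat.succ_ne_zero d)
        have hptn' : ptn p = ptn (p - 2^(d+1)) + 2^(d+1) := ptn_shift hdvd (by omega)
        have huniqR : ∀ i < 2^(d+1), (fun i => f (i + 2^(d+1))) i = .A → i = p - 2^(d+1) := by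
          intro i hi hA'; have := huniq _ (by omega) hA'; omega
        have hptnR : (fun i => f (i + 2^(d+1))) (ptn (p - 2^(d+1))) = .C := by
          show f (ptn (p - 2^(d+1)) + 2^(d+1)) = .C
          rw [← hptn']; exact hptn
        have hwrA : Wc (fun i => f (i + 2^(d+1))) (d+1) ≠ .A :=
          wc_ptnC_ne_A d _ (p - 2^(d+1)) (by omega) huniqR hptnR
        by_cases hBR : ∃ j < 2^(d+1), f (j + 2^(d+1)) = .B
        · have hwr : Wc (fun i => f (i + 2^(d+1))) (d+1) = .B :=
            ih _ (p - 2^(d+1)) (by omega) huniqR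
              (by show f (p - 2^(d+1) + 2^(d+1)) = .A
                  rwa [show p - 2^(d+1) + 2^(d+1) = p by omega]) hptnR hBR
          rw [hwr]
          rcases hwl : Wc f (d+1) with _ | _ | _
          · exact absurd hwl hLA
          · decide
          · decide
        · -- the B is in the left half
          have hiL : i < 2^(d+1) := by
            by_contra hc
            exact hBR ⟨i - 2^(d+1), by omega, by
              show f (i - 2^(d+1) + 2^(d+1)) = .B
              rwa [show i - 2^(d+1) + 2^(d+1) = i by omega]⟩
          have hwl : Wc f (d+1) = .B := hLB.2 ⟨i, hiL, hB⟩
          have hwrC : Wc (fun i => f (i + 2^(d+1))) (d+1) = .C := by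
            obtain ⟨j, hj, hleaf⟩ := wc_is_leaf (d+1) (fun i => f (i + 2^(d+1)))
            rcases hw : Wc (fun i => f (i + 2^(d+1))) (d+1) with _ | _ | _
            · exact absurd hw hwrA
            · exact (hBR ⟨j, hj, by rw [← hleaf]; exact hw⟩).elim
            · rfl
          rw [hwl, hwrC]; decide

lemma div_add_pow (x m t : ℕ) : (x + 2^(m+t)) / 2^m = x / 2^m + 2^t := by
  have h : 2^(m+t) = 2^t * 2^m := by rw [pow_add, mul_comm]
  rw [h, Nat.add_mul_div_right _ _ (Nat.two_pow_pos m)]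

/-- If the unique `A` is at `p` and the winner is `A`, then for each round
`k ∈ [1, d]` the sibling block of `p` at level `k` contains a `B`. -/
lemma wc_A_sibling : ∀ (d : ℕ) (f : ℕ → Cl) (p : ℕ), p < 2^d →
    (∀ i < 2^d, f i = .A → i = p) → Wc f d = .A →
    ∀ k, 1 ≤ k → k ≤ d →
      ∃ x < 2^d, f x = .B ∧ x / 2^k = p / 2^k ∧ x / 2^(k-1) ≠ p / 2^(k-1) := by
  intro d
  induction d with
  | zero => intro f p _ _ _ k hk1 hk0; omega
  | succ d ih =>
      intro f p hp huniq hw k hk1 hkd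
      have h2 : 2^(d+1) = 2^d + 2^d := by rw [pow_succ]; omega
      rw [Wc_succ] at hw
      by_cases hside : p < 2^d
      · -- A in left half
        have hnoA : ∀ j < 2^d, (fun i => f (i + 2^d)) j ≠ .A := by
          intro j hj hA'; have := huniq _ (by omega) hA'; omega
        obtain ⟨hRA, hRB⟩ := wc_noA d _ hnoA
        have hwl : Wc f d = .A ∧ Wc (fun i => f (i + 2^d)) d = .B := by
          rcases hwr' : Wc (fun i => f (i + 2^d)) d with _ | _ | _ <;>
            rcases hwl' : Wc f d with _ | _ | _ <;>
            rw [hwl', hwr'] at hw <;>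
            first
              | exact ⟨hwl', hwr'⟩
              | exact ⟨rfl, rfl⟩
              | exact absurd hwr' hRA
              | (exfalso; revert hw; decide)
        rcases Nat.lt_or_ge k (d+1) with hkd' | hkd'
        · -- recurse into the left half
          obtain ⟨x, hx, hxB, he, hne⟩ :=
            ih f p hside (fun i hi => huniq i (by omega)) hwl.1 k hk1 (by omega)
          exact ⟨x, by omega, hxB, he, hne⟩
        · -- k = d+1 : the right half contains a B
          have hk : k = d+1 := by omega
          subst hk
          obtain ⟨j, hj, hjB⟩ := hRB.1 hwl.2
          refine ⟨j + 2^d, by omega, hjB, ?_, ?_⟩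
          · rw [Nat.div_eq_of_lt (by omega), Nat.div_eq_of_lt (by omega)]
          · have e1 : (j + 2^d) / 2^(d+1-1) = 1 := by
              simp only [Nat.add_sub_cancel]
              exact Nat.div_eq_of_lt_le (by omega) (by omega)
            have e2 : p / 2^(d+1-1) = 0 := by
              simp only [Nat.add_sub_cancel]
              exact Nat.div_eq_of_lt hside
            rw [e1, e2]; omega
      · -- A in right half
        have hnoA : ∀ j < 2^d, f j ≠ .A := by
          intro j hj hA'; have := huniq j (by omega) hA'; omega
        obtain ⟨hLA, hLB⟩ := wc_noA d f hnoA
        have hwr : Wc (fun i => f (i + 2^d)) d = .A ∧ Wc f d = .B := by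
          rcases hwr' : Wc (fun i => f (i + 2^d)) d with _ | _ | _ <;>
            rcases hwl' : Wc f d with _ | _ | _ <;>
            rw [hwl', hwr'] at hw <;>
            first
              | exact ⟨hwr', hwl'⟩
              | exact ⟨rfl, rfl⟩
              | exact absurd hwl' hLA
              | (exfalso; revert hw; decide)
        rcases Nat.lt_or_ge k (d+1) with hkd' | hkd'
        · -- recurse into the right half
          have huniq' : ∀ i < 2^d, (fun i => f (i + 2^d)) i = .A → i = p - 2^d := by
            intro i hi hA'; have := huniq _ (by omega) hA'; omega
          obtain ⟨x, hx, hxB, he, hne⟩ :=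
            ih (fun i => f (i + 2^d)) (p - 2^d) (by omega) huniq' hwr.1 k hk1 (by omega)
          refine ⟨x + 2^d, by omega, hxB, ?_, ?_⟩
          · have hpow : (2:ℕ)^(k + (d-k)) = 2^d := by rw [show k + (d-k) = d by omega]
            rw [show (d:ℕ) = k + (d - k) by omega, div_add_pow,
              show p = p - 2^(k + (d-k)) + 2^(k + (d-k)) by omega, div_add_pow, he, hpow]
          · have hpow : (2:ℕ)^((k-1) + (d-(k-1))) = 2^d := by
              rw [show (k-1) + (d-(k-1)) = d by omega]
            rw [show (d:ℕ) = (k-1) + (d - (k-1)) by omega, div_add_pow,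
              show p = p - 2^((k-1) + (d-(k-1))) + 2^((k-1) + (d-(k-1))) by omega,
              div_add_pow, hpow]
            intro hcon
            exact hne (by omega)
        · -- k = d+1 : the left half contains a B
          have hk : k = d+1 := by omega
          subst hk
          obtain ⟨j, hj, hjB⟩ := hLB.1 hwr.2
          refine ⟨j, by omega, hjB, ?_, ?_⟩
          · rw [Nat.div_eq_of_lt (by omega), Nat.div_eq_of_lt (by omega)]
          · have e1 : j / 2^(d+1-1) = 0 := by
              simp only [Nat.add_sub_cancel]
              exact Nat.div_eq_of_lt hj
            have e2 : p / 2^(d+1-1) = 1 := by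
              simp only [Nat.add_sub_cancel]
              exact Nat.div_eq_of_lt_le (by omega) (by omega)
            rw [e1, e2]; omega

lemma two_mul_div (y e : ℕ) : (2*y) / 2^(e+1) = y / 2^e := by
  rw [pow_succ', Nat.mul_div_mul_left _ _ (by norm_num : (0:ℕ) < 2)]

lemma two_mul_add_one_div (y e : ℕ) : (2*y+1) / 2^(e+1) = y / 2^e := by
  rw [pow_succ', ← Nat.div_div_eq_div_mul]
  congr 1
  omega

/-- The position of label `x` in the shuffled right half (`h = n/2`). -/
def posR (h x : ℕ) : ℕ := if x < h then 2*x else 2*(x-h)+1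

lemma posR_lt {e x : ℕ} (hx : x < 2^(e+2)) : posR (2^(e+1)) x < 2^(e+2) := by
  have h1 : (2:ℕ)^(e+2) = 2*2^(e+1) := by rw [pow_succ']
  unfold posR; split <;> omega

lemma shuffle_posR {e x : ℕ} (hx : x < 2^(e+2)) :
    shufflePerm (2^(e+2)) (posR (2^(e+1)) x) = x := by
  have h1 : (2:ℕ)^(e+2) = 2*2^(e+1) := by rw [pow_succ']
  have h2 : (2:ℕ)^(e+2)/2 = 2^(e+1) := by omega
  unfold posR shufflePerm
  split <;> split <;> omega

lemma shuffle_lt {e j : ℕ} (hj : j < 2^(e+2)) : shufflePerm (2^(e+2)) j < 2^(e+2) := by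
  have h1 : (2:ℕ)^(e+2) = 2*2^(e+1) := by rw [pow_succ']
  have h2 : (2:ℕ)^(e+2)/2 = 2^(e+1) := by omega
  unfold shufflePerm
  split <;> omega

lemma shuffle_inj {e j x : ℕ} (hj : j < 2^(e+2)) (hx : x < 2^(e+2))
    (h : shufflePerm (2^(e+2)) j = x) : j = posR (2^(e+1)) x := by
  have h1 : (2:ℕ)^(e+2) = 2*2^(e+1) := by rw [pow_succ']
  have h2 : (2:ℕ)^(e+2)/2 = 2^(e+1) := by omega
  unfold shufflePerm at h
  unfold posR
  split at h <;> split <;> omega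

/-- The main class-level result: the overall winner class is not `C`. -/
lemma main_cl (e : ℕ) (c : ℕ → Cl) (p : ℕ) (hp : p < 2^(e+2))
    (hcp : c p = .A) (huniq : ∀ x < 2^(e+2), c x = .A → x = p)
    (hBex : ∃ x < 2^(e+2), c x = .B) :
    (if R3 (Wc (fun i => c (i % 2^(e+2))) (e+2))
        (Wc (fun i => c (shufflePerm (2^(e+2)) i % 2^(e+2))) (e+2)) = true
      then Wc (fun i => c (i % 2^(e+2))) (e+2)
      else Wc (fun i => c (shufflePerm (2^(e+2)) i % 2^(e+2))) (e+2)) ≠ .C := by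
  have h1 : (2:ℕ)^(e+2) = 2*2^(e+1) := by rw [pow_succ']
  have h0 : (2:ℕ)^(e+1) = 2*2^e := by rw [pow_succ']
  set fL : ℕ → Cl := fun i => c (i % 2^(e+2)) with hfL
  set fR : ℕ → Cl := fun i => c (shufflePerm (2^(e+2)) i % 2^(e+2)) with hfR
  have hfLv : ∀ i < 2^(e+2), fL i = c i := by
    intro i hi; rw [hfL]; simp only [Nat.mod_eq_of_lt hi]
  have hfRv : ∀ i < 2^(e+2), fR i = c (shufflePerm (2^(e+2)) i) := by
    intro i hi; rw [hfR]; simp only [Nat.mod_eq_of_lt (shuffle_lt hi)]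
  have hLuniq : ∀ i < 2^(e+2), fL i = .A → i = p := by
    intro i hi hA; rw [hfLv i hi] at hA; exact huniq i hi hA
  set q : ℕ := posR (2^(e+1)) p with hqdef
  have hq : q < 2^(e+2) := posR_lt hp
  have hRq : fR q = .A := by rw [hfRv q hq, shuffle_posR hp]; exact hcp
  have hRuniq : ∀ i < 2^(e+2), fR i = .A → i = q := by
    intro i hi hA
    rw [hfRv i hi] at hA
    have := huniq _ (shuffle_lt hi) hA
    exact shuffle_inj hi hp this
  have hBexR : ∃ i < 2^(e+2), fR i = .B := by
    obtain ⟨x, hx, hxB⟩ := hBex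
    exact ⟨posR (2^(e+1)) x, posR_lt hx, by rw [hfRv _ (posR_lt hx), shuffle_posR hx]; exact hxB⟩
  rcases hwl : Wc fL (e+2) with _ | _ | _
  · -- left winner class A : show right winner is not C
    have key : Wc fR (e+2) ≠ .C := by
      intro hwr
      obtain ⟨x, hx, hxB, hxe, hxne⟩ :=
        wc_A_sibling (e+2) fL p hp hLuniq hwl (e+1) (by omega) (by omega)
      simp only [Nat.add_sub_cancel] at hxne
      have hdiff : posR (2^(e+1)) x / 2^(e+1) ≠ q / 2^(e+1) := by
        by_cases hph : p < 2^(e+1)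
        · have hx0 : x / 2^(e+1) = 0 := by rw [hxe, Nat.div_eq_of_lt hph]
          have hxh : x < 2^(e+1) := by
            by_contra hc
            have h3 : x / 2^(e+1) = 1 := Nat.div_eq_of_lt_le (by omega) (by omega)
            omega
          rw [hqdef]
          unfold posR
          rw [if_pos hxh, if_pos hph, two_mul_div, two_mul_div]
          exact hxne
        · have hp1 : p / 2^(e+1) = 1 := Nat.div_eq_of_lt_le (by omega) (by omega)
          have hx1 : x / 2^(e+1) = 1 := by rw [hxe, hp1]
          have hxh : ¬ x < 2^(e+1) := by
            intro hc; rw [Nat.div_eq_of_lt hc] at hx1; omega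
          rw [hqdef]
          unfold posR
          rw [if_neg hxh, if_neg hph, two_mul_add_one_div, two_mul_add_one_div]
          have ex := div_add_pow (x - 2^(e+1)) e 1
          rw [show x - 2^(e+1) + 2^(e+1) = x by omega] at ex
          have ep := div_add_pow (p - 2^(e+1)) e 1
          rw [show p - 2^(e+1) + 2^(e+1) = p by omega] at ep
          omega
      have hopp := wc_C_opp (e+1) fR q hq hRuniq hwr (posR (2^(e+1)) x) (posR_lt hx) hdiff
      rw [hfRv _ (posR_lt hx), shuffle_posR hx] at hopp
      rw [hfLv x hx] at hxB
      rw [hxB] at hopp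
      exact Cl.noConfusion hopp
    rcases hwr : Wc fR (e+2) with _ | _ | _
    · decide
    · decide
    · exact absurd hwr key
  · -- left winner class B : the final winner is A or B
    rcases hwr : Wc fR (e+2) with _ | _ | _ <;> decide
  · -- left winner class C : the right winner is B
    set s : ℕ := if p < 2^(e+1) then p + 2^(e+1) else p - 2^(e+1) with hsdef
    have hs : s < 2^(e+2) := by rw [hsdef]; split <;> omega
    have hsdiff : s / 2^(e+1) ≠ p / 2^(e+1) := by
      by_cases hph : p < 2^(e+1)
      · have e1 : p / 2^(e+1) = 0 := Nat.div_eq_of_lt hph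
        have e2 : (p + 2^(e+1)) / 2^(e+1) = 1 := Nat.div_eq_of_lt_le (by omega) (by omega)
        rw [hsdef, if_pos hph, e1, e2]; omega
      · have e1 : p / 2^(e+1) = 1 := Nat.div_eq_of_lt_le (by omega) (by omega)
        have e2 : (p - 2^(e+1)) / 2^(e+1) = 0 := Nat.div_eq_of_lt (by omega)
        rw [hsdef, if_neg hph, e1, e2]; omega
    have hsC : fL s = .C := wc_C_opp (e+1) fL p hp hLuniq hwl s hs hsdiff
    rw [hfLv s hs] at hsC
    have hptnq : ptn q = posR (2^(e+1)) s := by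
      by_cases hph : p < 2^(e+1)
      · have hqval : q = 2*p := by rw [hqdef]; unfold posR; rw [if_pos hph]
        have hsval : s = p + 2^(e+1) := by rw [hsdef, if_pos hph]
        rw [hqval, hsval]
        unfold ptn posR
        rw [if_pos (by omega : 2*p % 2 = 0), if_neg (by omega : ¬ p + 2^(e+1) < 2^(e+1))]
        omega
      · have hqval : q = 2*(p - 2^(e+1)) + 1 := by rw [hqdef]; unfold posR; rw [if_neg hph]
        have hsval : s = p - 2^(e+1) := by rw [hsdef, if_neg hph]
        rw [hqval, hsval]
        unfold ptn posR
        rw [if_neg (by omega : ¬ (2*(p - 2^(e+1)) + 1) % 2 = 0),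
          if_pos (by omega : p - 2^(e+1) < 2^(e+1))]
        omega
    have hRptn : fR (ptn q) = .C := by
      rw [hptnq, hfRv _ (posR_lt hs), shuffle_posR hs]
      exact hsC
    have hwr : Wc fR (e+2) = .B := wc_ptnC_B (e+1) fR q hq hRuniq hRq hRptn hBexR
    rw [hwr]; decide

/-- The class of a vertex in a perfect manipulator tournament. -/
def clOf {n : ℕ} (a : Fin n) (B : Finset (Fin n)) (v : Fin n) : Cl :=
  if v = a then .A else if v ∈ B then .B else .C

lemma glue (e : ℕ) (T : Fin (2^(e+2)) → Fin (2^(e+2)) → Bool) (a : Fin (2^(e+2)))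
    (B C : Finset (Fin (2^(e+2)))) (hpm : IsPerfectManipulator T a B C)
    (gL gR : ℕ → Fin (2^(e+2)))
    (hgL : ∀ i, (gL i : ℕ) = i % 2^(e+2))
    (hgR : ∀ i, (gR i : ℕ) = shufflePerm (2^(e+2)) i % 2^(e+2)) :
    (VTree.node (VTree.completeTree gL (e+2)) (VTree.completeTree gR (e+2))).eval T ∉ C := by
  obtain ⟨⟨hirr, hasym⟩, hBne, hCne, haB, haC, hdisj, hcover, hab, hbc, hca⟩ := hpm
  have hn0 : 0 < 2^(e+2) := Nat.two_pow_pos _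
  have htri : ∀ v : Fin (2^(e+2)), v = a ∨ v ∈ B ∨ v ∈ C := by
    intro v
    have hv : v ∈ insert a (B ∪ C) := by rw [hcover]; exact Finset.mem_univ v
    simpa [Finset.mem_insert, Finset.mem_union] using hv
  have hclA : clOf a B a = .A := by unfold clOf; rw [if_pos rfl]
  have hclB : ∀ v, v ∈ B → clOf a B v = .B := by
    intro v hv
    unfold clOf
    rw [if_neg (by rintro rfl; exact haB hv), if_pos hv]
  have hclC : ∀ v, v ∈ C → clOf a B v = .C := by
    intro v hv
    unfold clOf
    rw [if_neg (by rintro rfl; exact haC hv),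
      if_neg (fun hB => Finset.disjoint_left.mp hdisj hB hv)]
  have hclA' : ∀ v, clOf a B v = .A → v = a := by
    intro v hv
    by_cases h : v = a
    · exact h
    · unfold clOf at hv
      rw [if_neg h] at hv
      split at hv <;> exact absurd hv (by decide)
  have hT : ∀ u v, clOf a B u ≠ clOf a B v → T u v = R3 (clOf a B u) (clOf a B v) := by
    intro u v hne
    rcases htri u with rfl | hu | hu <;> rcases htri v with rfl | hv | hv
    · exact absurd rfl hne
    · rw [hclA, hclB v hv]; exact hab v hv
    · rw [hclA, hclC v hv]
      have hne' : u ≠ v := by rintro rfl; exact haC hv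
      rw [hasym u v hne', hca v hv]
      rfl
    · have hne' : u ≠ v := by rintro rfl; exact haB hu
      rw [hclB u hu, hclA, hasym u v hne', hab u hu]
      rfl
    · rw [hclB u hu, hclB v hv] at hne; exact absurd rfl hne
    · rw [hclB u hu, hclC v hv]; exact hbc u hu v hv
    · rw [hclC u hu, hclA]; exact hca u hu
    · have hne' : u ≠ v := by rintro rfl; exact Finset.disjoint_left.mp hdisj hv hu
      rw [hclC u hu, hclB v hv, hasym u v hne', hbc v hv u hu]
      rfl
    · rw [hclC u hu, hclC v hv] at hne; exact absurd rfl hne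
  set c : ℕ → Cl := fun x => clOf a B (gL x) with hc
  have hgLv : ∀ i, gL (i % 2^(e+2)) = gL i := by
    intro i
    apply Fin.ext
    rw [hgL, hgL, Nat.mod_eq_of_lt (Nat.mod_lt _ hn0)]
  have hfunL : (fun i => clOf a B (gL i)) = (fun i => c (i % 2^(e+2))) := by
    funext i
    show clOf a B (gL i) = clOf a B (gL (i % 2^(e+2)))
    rw [hgLv i]
  have hfunR : (fun i => clOf a B (gR i)) =
      (fun i => c (shufflePerm (2^(e+2)) i % 2^(e+2))) := by
    funext i
    show clOf a B (gR i) = clOf a B (gL (shufflePerm (2^(e+2)) i % 2^(e+2)))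
    congr 1
    apply Fin.ext
    rw [hgR, hgL, Nat.mod_eq_of_lt (Nat.mod_lt _ hn0)]
  have hgLa : gL (a : ℕ) = a := by
    apply Fin.ext
    rw [hgL, Nat.mod_eq_of_lt a.isLt]
  have hcp : c (a : ℕ) = .A := by rw [hc]; show clOf a B (gL (a : ℕ)) = .A; rw [hgLa]; exact hclA
  have huniq : ∀ x < 2^(e+2), c x = .A → x = (a : ℕ) := by
    intro x hx hA
    have h := hclA' (gL x) hA
    have hval := congrArg Fin.val h
    rw [hgL, Nat.mod_eq_of_lt hx] at hval
    exact hval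
  have hBex : ∃ x < 2^(e+2), c x = .B := by
    obtain ⟨b, hb⟩ := hBne
    refine ⟨(b : ℕ), b.isLt, ?_⟩
    show clOf a B (gL (b : ℕ)) = .B
    rw [show gL (b : ℕ) = b from Fin.ext (by rw [hgL, Nat.mod_eq_of_lt b.isLt])]
    exact hclB b hb
  intro hmem
  have hcl := clOf_eval T (clOf a B) hT
    (VTree.node (VTree.completeTree gL (e+2)) (VTree.completeTree gR (e+2)))
  rw [show (VTree.node (VTree.completeTree gL (e+2)) (VTree.completeTree gR (e+2))).map
        (clOf a B) =
      VTree.node ((VTree.completeTree gL (e+2)).map (clOf a B))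
        ((VTree.completeTree gR (e+2)).map (clOf a B)) from rfl,
    map_completeTree, map_completeTree, hfunL, hfunR] at hcl
  have hnode : ∀ (f g : ℕ → Cl),
      (VTree.node (VTree.completeTree f (e+2)) (VTree.completeTree g (e+2))).eval R3 =
        if R3 (Wc f (e+2)) (Wc g (e+2)) = true then Wc f (e+2) else Wc g (e+2) :=
    fun _ _ => rfl
  rw [hnode] at hcl
  have hmain := main_cl e c (a : ℕ) a.isLt hcp huniq hBex
  rw [← hcl] at hmain
  exact hmain (hclC _ hmem)

end PMaux

/-- Whenever the voting tree `Φ` with `2n` leaves `(1, …, n, φ(1), …, φ(n))` is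
applied to a perfect manipulator tournament with parts `{α}`, `B`, `C`, the
winner is not in `C`. -/
theorem shuffleTree_winner_not_in_C {d n : ℕ} (hn : n = 2 ^ d) (h4 : 4 ≤ n)
    (T : Fin n → Fin n → Bool) (a : Fin n) (B C : Finset (Fin n))
    (hpm : IsPerfectManipulator T a B C) :
    (VTree.node
        (VTree.completeTree
          (fun i : ℕ => (⟨i % n, Nat.mod_lt i (hn ▸ Nat.two_pow_pos d)⟩ : Fin n)) d)
        (VTree.completeTree
          (fun i : ℕ =>
            (⟨shufflePerm n i % n, Nat.mod_lt _ (hn ▸ Nat.two_pow_pos d)⟩ : Fin n)) d)).eval T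
      ∉ C := by
  have hd2 : 2 ≤ d := by
    by_contra hc
    push_neg at hc
    interval_cases d <;> norm_num at hn <;> omega
  obtain ⟨e, rfl⟩ : ∃ e, d = e + 2 := ⟨d - 2, by omega⟩
  subst hn
  exact PMaux.glue e T a B C hpm _ _ (fun i => rfl) (fun i => rfl)
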